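/- Let Γ be a finite connected self 2-distance graph with at least two vertices whose triangles are pairwise vertex-disjoint, and which is not isomorphic to the cycle graph Cₙ for any odd n ≥ 5. Then the maximum degree of Γ equals 3. -/

import Mathlib

/-!
Two triangles through a common vertex coincide, both in `G` and in its isomorphic copy
`twoDistGraph G`. Hence the neighbours of a vertex span at most one edge `xy`, and two further
neighbours `r`, `s` would span two distinct triangles `{x, r, s}` and `{y, r, s}` of
`twoDistGraph G`, since any two non-adjacent neighbours are at distance two. So every degree is at
most three.

If every degree were at most two, the connected graph `G` would be a tree or a Hamiltonian cycle.
A proper 2-colouring is constant on pairs at distance two, so for a tree or an even cycle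
`twoDistGraph G` would be disconnected; `K₃` has no pair at distance two at all; and odd cycles of
length at least five are excluded.
-/

open SimpleGraph

/-- The 2-distance graph of a graph `G`: two distinct vertices are adjacent
iff their distance in `G` equals `2`. -/
def twoDistGraph {V : Type*} (G : SimpleGraph V) : SimpleGraph V where
  Adj u v := G.dist u v = 2
  symm := by
    constructor
    intro u v h
    show G.dist v u = 2
    rwa [SimpleGraph.dist_comm]
  loopless := by
    constructor
    intro v h
    show False
    simp [SimpleGraph.dist_self] at h

/-- `G` has an `n`-cycle subgraph: `n` distinct vertices `v 0, …, v (n-1)` with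
`v i` adjacent to `v (i+1 mod n)` for all `i`. -/
def HasNCycle {V : Type*} (G : SimpleGraph V) (n : ℕ) : Prop :=
  ∃ v : ZMod n → V, Function.Injective v ∧ ∀ i, G.Adj (v i) (v (i + 1))

/-- The edged product `C₅|C₃`: a pentagon and a triangle glued along an edge. -/
def C5C3 : SimpleGraph (Fin 6) :=
  SimpleGraph.fromEdgeSet {s(0,1), s(1,2), s(2,3), s(3,4), s(4,5), s(5,0), s(1,5)}

namespace SimpleGraph

variable {V : Type*} {G : SimpleGraph V}

lemma twoDistGraph_adj_iff {u v : V} :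
    (twoDistGraph G).Adj u v ↔ u ≠ v ∧ ¬G.Adj u v ∧ (G.commonNeighbors u v).Nonempty := by
  rw [← edist_eq_two_iff]
  exact ENat.toNat_eq_iff two_ne_zero

lemma twoDistGraph_le_compl : twoDistGraph G ≤ Gᶜ := fun _ _ h ↦
  (twoDistGraph_adj_iff.mp h).imp_right And.left

lemma twoDistGraph_adj_of_adj_of_adj {u v w : V} (hu : G.Adj v u) (hw : G.Adj v w) (hne : u ≠ w)
    (hnadj : ¬G.Adj u w) : (twoDistGraph G).Adj u w :=
  twoDistGraph_adj_iff.mpr ⟨hne, hnadj, v, hu.symm, hw.symm⟩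

lemma Coloring.eq_of_twoDistGraph_adj (c : G.Coloring (Fin 2)) {u v : V}
    (h : (twoDistGraph G).Adj u v) : c u = c v := by
  obtain ⟨-, -, w, huw, hvw⟩ := twoDistGraph_adj_iff.mp h
  have := c.valid huw
  have := c.valid hvw
  omega

lemma Coloring.eq_of_twoDistGraph_reachable (c : G.Coloring (Fin 2)) {u v : V}
    (h : (twoDistGraph G).Reachable u v) : c u = c v := by
  obtain ⟨p⟩ := h
  induction p with
  | nil => rfl
  | cons h _ ih => exact (c.eq_of_twoDistGraph_adj h).trans ih

lemma not_colorable_two_of_connected_twoDistGraph (h : (twoDistGraph G).Connected) {u v : V}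
    (huv : G.Adj u v) : ¬G.Colorable 2 := fun ⟨c⟩ ↦
  c.valid huv (c.eq_of_twoDistGraph_reachable (h.preconnected u v))

def TrianglesDisjoint (G : SimpleGraph V) : Prop :=
  ∀ s t : Finset V, G.IsNClique 3 s → G.IsNClique 3 t → s ≠ t → Disjoint s t

lemma TrianglesDisjoint.comap {W : Type*} {H : SimpleGraph W} (h : G.TrianglesDisjoint)
    (f : H ↪g G) : H.TrianglesDisjoint := by
  intro s t hs ht hst
  have hmap : ∀ {u}, H.IsNClique 3 u → G.IsNClique 3 (u.map f.toEmbedding) := fun hu ↦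
    hu.map.mono ((map_le_iff_le_comap _ _ _).mpr (Embedding.comap_eq f).ge)
  rw [← Finset.disjoint_map f.toEmbedding]
  exact h _ _ (hmap hs) (hmap ht) (Finset.map_inj.not.mpr hst)

lemma TrianglesDisjoint.eq_of_mem_of_mem (h : G.TrianglesDisjoint) {s t : Finset V}
    (hs : G.IsNClique 3 s) (ht : G.IsNClique 3 t) {v : V} (hvs : v ∈ s) (hvt : v ∈ t) : s = t :=
  by_contra fun hst ↦ Finset.disjoint_left.mp (h s t hs ht hst) hvs hvt

lemma TrianglesDisjoint.eq_or_eq_of_adj (h : G.TrianglesDisjoint) {v x y p q : V}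
    (hx : G.Adj v x) (hy : G.Adj v y) (hxy : G.Adj x y)
    (hp : G.Adj v p) (hq : G.Adj v q) (hpq : G.Adj p q) : p = x ∨ p = y := by
  classical
  have heq := h.eq_of_mem_of_mem (is3Clique_triple_iff.mpr ⟨hp, hq, hpq⟩)
    (is3Clique_triple_iff.mpr ⟨hx, hy, hxy⟩) (Finset.mem_insert_self v _)
    (Finset.mem_insert_self v _)
  have hmem : p ∈ ({v, x, y} : Finset V) := heq ▸ by simp
  simp only [Finset.mem_insert, Finset.mem_singleton] at hmem
  exact hmem.resolve_left hp.ne'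

lemma degree_le_three_of_trianglesDisjoint [G.LocallyFinite]
    (hG : G.TrianglesDisjoint) (h₂ : (twoDistGraph G).TrianglesDisjoint) (v : V) :
    G.degree v ≤ 3 := by
  classical
  by_contra! hdeg
  obtain ⟨x, y, hxy, hx, hy, hedge⟩ : ∃ x y, x ≠ y ∧ G.Adj v x ∧ G.Adj v y ∧
      ∀ p q, G.Adj v p → G.Adj v q → G.Adj p q → p = x ∨ p = y := by
    by_cases hE : ∃ x y, G.Adj v x ∧ G.Adj v y ∧ G.Adj x y
    · obtain ⟨x, y, hx, hy, hxy⟩ := hE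
      exact ⟨x, y, hxy.ne, hx, hy, fun p q ↦ hG.eq_or_eq_of_adj hx hy hxy⟩
    · obtain ⟨x, hx, y, hy, hxy⟩ := Finset.one_lt_card.mp
        (show 1 < (G.neighborFinset v).card by rw [card_neighborFinset_eq_degree]; omega)
      rw [mem_neighborFinset] at hx hy
      exact ⟨x, y, hxy, hx, hy, fun p q hp hq hpq ↦ (hE ⟨p, q, hp, hq, hpq⟩).elim⟩
  obtain ⟨r, hr, s, hs, hrs⟩ := Finset.one_lt_card.mp
    (show 1 < (((G.neighborFinset v).erase x).erase y).card by
      have := Finset.pred_card_le_card_erase (s := G.neighborFinset v) (a := x)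
      have := Finset.pred_card_le_card_erase (s := (G.neighborFinset v).erase x) (a := y)
      rw [card_neighborFinset_eq_degree] at *
      omega)
  simp only [Finset.mem_erase, mem_neighborFinset] at hr hs
  have hdist : ∀ p q, G.Adj v p → G.Adj v q → p ≠ q → p ≠ x → p ≠ y →
      (twoDistGraph G).Adj p q :=
    fun p q hp hq hpq hpx hpy ↦ twoDistGraph_adj_of_adj_of_adj hp hq hpq
      fun h ↦ (hedge p q hp hq h).elim hpx hpy
  have htriangle : ∀ z, G.Adj v z → z ≠ r → z ≠ s →
      (twoDistGraph G).IsNClique 3 {z, r, s} :=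
    fun z hz hzr hzs ↦ is3Clique_triple_iff.mpr
      ⟨(hdist r z hr.2.2 hz hzr.symm hr.2.1 hr.1).symm,
       (hdist s z hs.2.2 hz hzs.symm hs.2.1 hs.1).symm, hdist r s hr.2.2 hs.2.2 hrs hr.2.1 hr.1⟩
  have heq := h₂.eq_of_mem_of_mem (htriangle x hx hr.2.1.symm hs.2.1.symm)
    (htriangle y hy hr.1.symm hs.1.symm) (v := r) (by simp) (by simp)
  have hmem : x ∈ ({y, r, s} : Finset V) := heq ▸ Finset.mem_insert_self x _
  simp only [Finset.mem_insert, Finset.mem_singleton] at hmem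
  rcases hmem with h | h | h
  exacts [hxy h, hr.2.1 h.symm, hs.2.1 h.symm]

lemma Walk.IsCycle.toSubgraph_adj_of_degree_le_two [G.LocallyFinite]
    (hdeg : ∀ v, G.degree v ≤ 2) {u w x : V} {p : G.Walk u u} (hp : p.IsCycle)
    (hw : w ∈ p.support) (hx : G.Adj w x) : p.toSubgraph.Adj w x := by
  have heq : p.toSubgraph.neighborSet w = G.neighborSet w :=
    Set.eq_of_subset_of_ncard_le (p.toSubgraph.neighborSet_subset w)
      (by rw [hp.ncard_neighborSet_toSubgraph_eq_two hw, Set.ncard_eq_toFinset_card']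
          exact hdeg w)
      (Set.toFinite _)
  exact (heq ▸ hx : x ∈ p.toSubgraph.neighborSet w)

lemma Connected.isHamiltonianCycle_of_degree_le_two [DecidableEq V] [G.LocallyFinite]
    (hconn : G.Connected) (hdeg : ∀ v, G.degree v ≤ 2) {u : V} {p : G.Walk u u}
    (hp : p.IsCycle) : p.IsHamiltonianCycle := by
  have hsupp : ∀ v, v ∈ p.support := fun v ↦ by
    simpa using (hconn u v).mem_subgraphVerts
      (fun w hw x hx ↦ hp.toSubgraph_adj_of_degree_le_two hdeg (by simpa using hw) hx)
      (by simp)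
  refine Walk.isHamiltonianCycle_iff_isCycle_and_support_count_tail_eq_one.mpr
    ⟨hp, fun v ↦ List.count_eq_one_of_mem hp.support_nodup ?_⟩
  rcases p.mem_support_iff.mp (hsupp v) with rfl | h
  exacts [Walk.end_mem_tail_support hp.not_nil, h]

lemma Copy.nonempty_iso_of_degree_le {W : Type*} {H : SimpleGraph W} [Fintype V] [Fintype W]
    [DecidableRel G.Adj] [DecidableRel H.Adj] (f : Copy H G)
    (hcard : Fintype.card W = Fintype.card V) (hdeg : ∀ a, G.degree (f a) ≤ H.degree a) :
    Nonempty (H ≃g G) := by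
  have hreflect : ∀ a b, G.Adj (f a) (f b) → H.Adj a b := by
    intro a b hab
    have hsurj := ((Fintype.bijective_iff_injective_and_card (f.mapNeighborSet a)).mpr
      ⟨(f.mapNeighborSet a).injective, by
        simp only [card_neighborSet_eq_degree]; exact le_antisymm (f.degree_le a) (hdeg a)⟩).2
    obtain ⟨⟨b', hb'⟩, hb⟩ := hsurj ⟨f b, hab⟩
    obtain rfl : b' = b := f.injective (congrArg Subtype.val hb)
    exact hb'
  have hbij : Function.Bijective f :=
    (Fintype.bijective_iff_injective_and_card f).mpr ⟨f.injective, hcard⟩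
  exact ⟨⟨Equiv.ofBijective f hbij, fun {a b} ↦ ⟨hreflect a b, f.toHom.map_adj⟩⟩⟩

lemma cycleGraph_degree_of_three_le {n : ℕ} (hn : 3 ≤ n) (a : Fin n) :
    (cycleGraph n).degree a = 2 := by
  obtain ⟨k, rfl⟩ := Nat.exists_eq_add_of_le' hn
  exact cycleGraph_degree_three_le

lemma Connected.nonempty_iso_cycleGraph [Fintype V] [DecidableRel G.Adj] (hconn : G.Connected)
    (hdeg : ∀ v, G.degree v ≤ 2) (hcyc : ¬G.IsAcyclic) :
    Nonempty (cycleGraph (Fintype.card V) ≃g G) := by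
  classical
  obtain ⟨u, p, hp⟩ : ∃ u, ∃ p : G.Walk u u, p.IsCycle := by
    simpa [IsAcyclic] using hcyc
  have hlen := (hconn.isHamiltonianCycle_of_degree_le_two hdeg hp).length_eq
  have h3 : 3 ≤ Fintype.card V := hlen ▸ hp.three_le_length
  obtain ⟨f⟩ := (cycleGraph_isContained_iff h3).mpr ⟨u, p, hp, hlen⟩
  exact f.nonempty_iso_of_degree_le (Fintype.card_fin _) fun a ↦
    (cycleGraph_degree_of_three_le h3 a).symm ▸ hdeg (f a)

lemma exists_three_le_degree_of_iso_twoDistGraph [Fintype V] [DecidableRel G.Adj]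
    (hconn : G.Connected) (hcard : 1 < Fintype.card V) (e : twoDistGraph G ≃g G)
    (hcyc : ∀ n : ℕ, 5 ≤ n → Odd n → IsEmpty (G ≃g cycleGraph n)) :
    ∃ v, 3 ≤ G.degree v := by
  by_contra! hdeg
  have h₂ : (twoDistGraph G).Connected := e.connected_iff.mpr hconn
  have : Nontrivial V := Fintype.one_lt_card_iff_nontrivial.mp hcard
  obtain ⟨v⟩ := hconn.nonempty
  obtain ⟨w, hvw⟩ := hconn.preconnected.exists_adj_of_nontrivial v
  by_cases hac : G.IsAcyclic
  · exact not_colorable_two_of_connected_twoDistGraph h₂ hvw hac.colorable_two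
  obtain ⟨φ⟩ := hconn.nonempty_iso_cycleGraph (fun v ↦ Nat.le_of_lt_succ (hdeg v)) hac
  rcases Nat.even_or_odd (Fintype.card V) with heven | hodd
  · have hcol := (cycleGraph.bicoloring_of_even _ heven).colorable.of_hom φ.symm.toHom
    rw [Fintype.card_bool] at hcol
    exact not_colorable_two_of_connected_twoDistGraph h₂ hvw hcol
  obtain h3 | h5 : Fintype.card V = 3 ∨ 5 ≤ Fintype.card V := by
    obtain ⟨k, hk⟩ := hodd
    omega
  · rw [h3, cycleGraph_three_eq_top] at φ
    have hcompl := twoDistGraph_le_compl (e.symm.map_adj_iff.mpr hvw)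
    exact hcompl.2 (φ.symm.map_adj_iff.mp (φ.symm.injective.ne hcompl.1))
  · exact (hcyc _ h5 hodd).false φ.symm

end SimpleGraph

/-- A connected self 2-distance graph with pairwise vertex-disjoint triangles,
not an odd cycle of length ≥ 5, has maximum degree 3. -/
theorem maxDegree_eq_three_of_disjointTriangles {V : Type*} [Fintype V]
    (G : SimpleGraph V) [DecidableRel G.Adj]
    (hconn : G.Connected) (hcard : 1 < Fintype.card V)
    (hself : Nonempty (twoDistGraph G ≃g G))
    (htri : ∀ s t : Finset V, G.IsNClique 3 s → G.IsNClique 3 t → s ≠ t → Disjoint s t)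
    (hcyc : ∀ n : ℕ, 5 ≤ n → Odd n → IsEmpty (G ≃g cycleGraph n)) :
    G.maxDegree = 3 := by
  obtain ⟨e⟩ := hself
  have hG : G.TrianglesDisjoint := htri
  obtain ⟨v, hv⟩ := exists_three_le_degree_of_iso_twoDistGraph hconn hcard e hcyc
  exact le_antisymm
    (maxDegree_le_of_forall_degree_le _ _ (degree_le_three_of_trianglesDisjoint hG
      (hG.comap e.toEmbedding)))
    (hv.trans (G.degree_le_maxDegree v))
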